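/- Let x₀, x_D ∈ ℝ² with x₀ ≠ x_D, and let n^L, n^R ∈ ℝ² be unit vectors with ⟪n^L, x₀ − x_D⟫ ≠ 0 and ⟪n^R, x₀ − x_D⟫ = 0. Define f(x) = (‖x₀ − x_D‖² / ⟪n^L, x₀ − x_D⟫) · ln(‖x − x_D‖ / ‖x₀ − x_D‖). Then f is harmonic on ℝ² \ {x_D}, f(x₀) = 0, ⟪∇f(x₀), n^L⟫ = 1, and ⟪∇f(x₀), n^R⟫ = 0. -/

import Mathlib

open scoped RealInnerProductSpace
open EuclideanSpace

/-- A function `u` is harmonic on a set `U ⊆ ℝⁿ` (as `EuclideanSpace ℝ (Fin n)`) if it is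
twice continuously differentiable on `U` and its Laplacian, i.e. the sum of the second
derivatives `∂²u/∂xᵢ²` along the standard basis directions, vanishes on `U`. -/
def HarmonicOn {n : ℕ} (u : EuclideanSpace ℝ (Fin n) → ℝ)
    (U : Set (EuclideanSpace ℝ (Fin n))) : Prop :=
  ContDiffOn ℝ 2 u U ∧ ∀ x ∈ U,
    ∑ i : Fin n, iteratedFDeriv ℝ 2 u x
      ![EuclideanSpace.single i (1 : ℝ), EuclideanSpace.single i (1 : ℝ)] = 0

/-!
With `r = ‖y - a‖`, the Hessian of `log r` at `y` takes `(v, v)` to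
`‖v‖² / r² - 2 ⟪y - a, v⟫² / r⁴`. Summing over an orthonormal basis and using Parseval gives
`Δ log ‖y - a‖ = (dim E - 2) / r²`, which vanishes in the plane. The gradient of `f` at `x₀` is
`(x₀ - x_D) / ⟪n^L, x₀ - x_D⟫`: the prefactor of `f` is chosen so that its `n^L`-component is `1`,
and its `n^R`-component vanishes because `n^R ⊥ x₀ - x_D`.
-/

open Real InnerProductSpace Filter Topology Module
open scoped Laplacian

section LogNorm

variable {E : Type*} [NormedAddCommGroup E] {a x : E}

theorem log_norm_sub_div_eventuallyEq {r : ℝ} (hr : r ≠ 0) (hx : x ≠ a) :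
    (fun y => log (‖y - a‖ / r)) =ᶠ[𝓝 x] fun y => log ‖y - a‖ - log r :=
  (eventually_ne_nhds hx).mono fun _ hy => log_div (norm_ne_zero_iff.2 (sub_ne_zero.2 hy)) hr

variable [InnerProductSpace ℝ E]

theorem hasFDerivAt_log_norm_sub (hx : x ≠ a) :
    HasFDerivAt (fun y => log ‖y - a‖) ((‖x - a‖ ^ 2)⁻¹ • innerSL ℝ (x - a)) x := by
  have hr : ‖x - a‖ ^ 2 ≠ 0 := by simpa [sub_eq_zero] using hx
  have hlog : (fun y => log ‖y - a‖) = fun y => 2⁻¹ * log (‖y - a‖ ^ 2) := by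
    ext y; rw [log_pow]; push_cast; ring
  rw [hlog]
  refine ((((hasFDerivAt_id x).sub_const a).norm_sq.log hr).const_mul 2⁻¹).congr_fderiv ?_
  ext v
  simp only [id_eq, map_sub, ContinuousLinearMap.comp_id, smul_apply, sub_apply, coe_innerSL_apply,
    nsmul_eq_mul, Nat.cast_ofNat, smul_eq_mul]
  ring

theorem fderiv_log_norm_sub_eventuallyEq (hx : x ≠ a) :
    fderiv ℝ (fun y => log ‖y - a‖) =ᶠ[𝓝 x] fun y => (‖y - a‖ ^ 2)⁻¹ • innerSL ℝ (y - a) :=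
  (eventually_ne_nhds hx).mono fun _ hy => (hasFDerivAt_log_norm_sub hy).fderiv

theorem iteratedFDeriv_two_log_norm_sub (hx : x ≠ a) (v : E) :
    iteratedFDeriv ℝ 2 (fun y => log ‖y - a‖) x ![v, v] =
      ‖v‖ ^ 2 / ‖x - a‖ ^ 2 - 2 * ⟪x - a, v⟫ ^ 2 / ‖x - a‖ ^ 4 := by
  have hr : ‖x - a‖ ^ 2 ≠ 0 := by simpa [sub_eq_zero] using hx
  have hinv := (hasDerivAt_inv hr).comp_hasFDerivAt x ((hasFDerivAt_id x).sub_const a).norm_sq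
  have hlin : HasFDerivAt (fun y => innerSL ℝ (y - a)) (innerSL ℝ : E →L[ℝ] E →L[ℝ] ℝ) x := by
    simpa only [map_sub] using (innerSL ℝ : E →L[ℝ] E →L[ℝ] ℝ).hasFDerivAt.sub_const (innerSL ℝ a)
  have h := (hinv.smul hlin).congr_of_eventuallyEq (fderiv_log_norm_sub_eventuallyEq hx)
  rw [iteratedFDeriv_two_apply, h.fderiv]
  have hvv : (innerSL ℝ : E →L[ℝ] E →L[ℝ] ℝ) v v = ‖v‖ ^ 2 := real_inner_self_eq_norm_sq v
  simp only [Matrix.cons_val_zero, Matrix.cons_val_one, Function.comp_apply, id,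
    add_apply, smul_apply,
    ContinuousLinearMap.smulRight_apply, ContinuousLinearMap.comp_apply,
    ContinuousLinearMap.id_apply, innerSL_apply_apply, hvv, smul_eq_mul]
  field_simp
  ring

theorem laplacian_log_norm_sub [FiniteDimensional ℝ E] (hx : x ≠ a) :
    Δ (fun y => log ‖y - a‖) x = (finrank ℝ E - 2) / ‖x - a‖ ^ 2 := by
  set b := stdOrthonormalBasis ℝ E
  have hparseval : ∑ i, ⟪x - a, b i⟫ ^ 2 = ‖x - a‖ ^ 2 := by
    simpa [sq, real_inner_comm] using b.sum_inner_mul_inner (x - a) (x - a)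
  rw [laplacian_eq_iteratedFDeriv_orthonormalBasis _ b]
  simp only [iteratedFDeriv_two_log_norm_sub hx, b.orthonormal.1, Finset.sum_sub_distrib,
    ← Finset.sum_div, ← Finset.mul_sum, hparseval]
  simp only [one_pow, Finset.sum_const, Finset.card_univ, Fintype.card_fin, nsmul_eq_mul, mul_one]
  field_simp

theorem contDiffAt_log_norm_sub {n : WithTop ℕ∞} (hx : x ≠ a) :
    ContDiffAt ℝ n (fun y => log ‖y - a‖) x :=
  ((contDiffAt_id.sub contDiffAt_const).norm ℝ (sub_ne_zero.2 hx)).log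
    (norm_ne_zero_iff.2 (sub_ne_zero.2 hx))

theorem harmonicAt_log_norm_sub [FiniteDimensional ℝ E] (hE : finrank ℝ E = 2) (hx : x ≠ a) :
    HarmonicAt (fun y => log ‖y - a‖) x :=
  ⟨contDiffAt_log_norm_sub hx, (eventually_ne_nhds hx).mono fun y hy => by
    simp [laplacian_log_norm_sub hy, hE]⟩

theorem hasFDerivAt_log_norm_sub_div {r : ℝ} (hr : r ≠ 0) (hx : x ≠ a) :
    HasFDerivAt (fun y => log (‖y - a‖ / r)) ((‖x - a‖ ^ 2)⁻¹ • innerSL ℝ (x - a)) x :=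
  ((hasFDerivAt_log_norm_sub hx).sub_const (log r)).congr_of_eventuallyEq
    (log_norm_sub_div_eventuallyEq hr hx)

theorem harmonicAt_log_norm_sub_div [FiniteDimensional ℝ E] (hE : finrank ℝ E = 2) {r : ℝ}
    (hr : r ≠ 0) (hx : x ≠ a) : HarmonicAt (fun y => log (‖y - a‖ / r)) x :=
  (harmonicAt_congr_nhds (log_norm_sub_div_eventuallyEq hr hx)).2
    ((harmonicAt_log_norm_sub hE hx).sub (harmonicAt_const _))

end LogNorm

theorem InnerProductSpace.HarmonicOnNhd.harmonicOn {n : ℕ} {u : EuclideanSpace ℝ (Fin n) → ℝ}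
    {U : Set (EuclideanSpace ℝ (Fin n))} (h : HarmonicOnNhd u U) : HarmonicOn u U :=
  ⟨h.contDiffOn, fun x hx => by
    simpa [laplacian_eq_iteratedFDeriv_orthonormalBasis u (EuclideanSpace.basisFun (Fin n) ℝ)]
      using (h x hx).2.eq_of_nhds⟩

theorem stmt9_general (x₀ xD nL nR : EuclideanSpace ℝ (Fin 2)) (hx : x₀ ≠ xD)
    (hL : ⟪nL, x₀ - xD⟫ ≠ 0) (hR : ⟪nR, x₀ - xD⟫ = 0)
    (f : EuclideanSpace ℝ (Fin 2) → ℝ)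
    (hf : f = fun x => (‖x₀ - xD‖ ^ 2 / ⟪nL, x₀ - xD⟫) * Real.log (‖x - xD‖ / ‖x₀ - xD‖)) :
    HarmonicOn f {xD}ᶜ ∧ f x₀ = 0 ∧
    ⟪gradient f x₀, nL⟫ = 1 ∧ ⟪gradient f x₀, nR⟫ = 0 := by
  set c := ‖x₀ - xD‖ ^ 2 / ⟪nL, x₀ - xD⟫
  have hb : ‖x₀ - xD‖ ≠ 0 := norm_ne_zero_iff.2 (sub_ne_zero.2 hx)
  have hharm : HarmonicOnNhd f {xD}ᶜ := fun x hxD =>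
    hf ▸ (harmonicAt_log_norm_sub_div (finrank_euclideanSpace_fin) hb hxD).const_smul (c := c)
  have hgrad (v) : ⟪gradient f x₀, v⟫ = ⟪v, x₀ - xD⟫ / ⟪nL, x₀ - xD⟫ := by
    rw [inner_gradient_left, hf, ((hasFDerivAt_log_norm_sub_div hb hx).const_mul c).fderiv]
    simp only [smul_apply, innerSL_apply_apply, smul_eq_mul, c, real_inner_comm v]
    field_simp
  refine ⟨hharm.harmonicOn, by simp [hf, div_self hb], ?_, ?_⟩
  · rw [hgrad, div_self hL]
  · rw [hgrad, hR, zero_div]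

theorem stmt9 (x₀ xD nL nR : EuclideanSpace ℝ (Fin 2)) (hx : x₀ ≠ xD)
    (hnL : ‖nL‖ = 1) (hnR : ‖nR‖ = 1)
    (hL : ⟪nL, x₀ - xD⟫ ≠ 0) (hR : ⟪nR, x₀ - xD⟫ = 0)
    (f : EuclideanSpace ℝ (Fin 2) → ℝ)
    (hf : f = fun x => (‖x₀ - xD‖ ^ 2 / ⟪nL, x₀ - xD⟫) * Real.log (‖x - xD‖ / ‖x₀ - xD‖)) :
    HarmonicOn f {xD}ᶜ ∧ f x₀ = 0 ∧
    ⟪gradient f x₀, nL⟫ = 1 ∧ ⟪gradient f x₀, nR⟫ = 0 :=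
  stmt9_general x₀ xD nL nR hx hL hR f hf
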